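/- If n(1-p) → c for a constant c > 0, then n(1 − J_ij) converges in distribution to a Poisson random variable with parameter 2c, where J_ij is the Jaccard index of a fixed pair of distinct vertices in G(n,p). -/

import Mathlib

open MeasureTheory ProbabilityTheory Filter
open scoped ENNReal
open Fin.NatCast

/-- The Erdős–Rényi random graph `G(n,p)`: each of the possible edges `{i,j}`, `i < j`,
is present independently with probability `p`. -/
noncomputable def gnp (n : ℕ) (p : ℝ≥0∞) (hp : p ≤ 1) :
    Measure ({e : Fin n × Fin n // e.1 < e.2} → Bool) :=
  Measure.pi fun _ => (PMF.bernoulli p.toNNReal (by simpa using ENNReal.toNNReal_mono ENNReal.one_ne_top hp)).toMeasure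

/-- The indicator `I_ij` that the edge `{i,j}` is present in the graph `ω`. -/
def eInd {n : ℕ} (ω : {e : Fin n × Fin n // e.1 < e.2} → Bool) (i j : Fin n) : ℕ :=
  if h : i < j then (if ω ⟨(i, j), h⟩ then 1 else 0)
  else if h' : j < i then (if ω ⟨(j, i), h'⟩ then 1 else 0) else 0

/-- `S_ij`, the number of common neighbors of vertices `i` and `j`. -/
def Sij {n : ℕ} (i j : Fin n) (ω : {e : Fin n × Fin n // e.1 < e.2} → Bool) : ℕ :=
  ∑ k ∈ Finset.univ \ {i, j}, eInd ω i k * eInd ω j k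

/-- `T_ij`, the number of vertices `k ∉ {i,j}` adjacent to at least one of `i`, `j`. -/
def Tij {n : ℕ} (i j : Fin n) (ω : {e : Fin n × Fin n // e.1 < e.2} → Bool) : ℕ :=
  ∑ k ∈ Finset.univ \ {i, j}, max (eInd ω i k) (eInd ω j k)

/-- The Jaccard index `J_ij = S_ij / T_ij` of vertices `i` and `j`, with the
convention `J_ij = p/(2-p)` when `T_ij = 0`. -/
noncomputable def jac {n : ℕ} (p : ℝ) (i j : Fin n)
    (ω : {e : Fin n × Fin n // e.1 < e.2} → Bool) : ℝ :=
  if Tij i j ω = 0 then p / (2 - p) else (Sij i j ω : ℝ) / (Tij i j ω : ℝ)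

/-!
Only the edges from `i` and `j` to the other `n` vertices matter, and for each other vertex `k`
the pair of indicators `(I_ik, I_jk)` is an independent draw from `pairWeight p`. Unless some `k`
is adjacent to neither `i` nor `j` (probability at most `n (1 - p)²`), we have `T = n` and
`n - S = D`, the number of `k` adjacent to exactly one of them, so that
`(n + 2)(1 - J) = (n + 2) D / n` with `D ~ Bin(n, 2p(1 - p))`. As `n · 2p(1 - p) → 2c`, the
binomial weights converge to the Poisson(2c) weights, and Tannery's theorem, with the domination
`C(n, d) x^d (1 - x)^(n - d) ≤ (n x)^d / d!`, passes to bounded continuous test functions.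
-/

open Finset Topology
open scoped Nat

section ProductWeights

variable {K A R : Type*} [Fintype K] [DecidableEq K] [Fintype A] [CommSemiring R]

theorem sum_prod_of_filter_eq (q : A → R) (P : A → Prop) [DecidablePred P] (s : Finset K) :
    ∑ u : K → A with ({k | P (u k)} : Finset K) = s, ∏ k, q (u k)
      = (∑ a with P a, q a) ^ #s * (∑ a with ¬ P a, q a) ^ (Fintype.card K - #s) := by
  have hfiber : ({u | ({k | P (u k)} : Finset K) = s} : Finset (K → A))
      = Fintype.piFinset fun k =>
          if k ∈ s then ({a | P a} : Finset A) else ({a | ¬ P a} : Finset A) := by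
    ext u
    simp only [mem_filter, mem_univ, true_and, Fintype.mem_piFinset, Finset.ext_iff]
    refine forall_congr' fun k => ?_
    split_ifs <;> simp_all
  rw [hfiber, ← prod_univ_sum]
  simp only [apply_ite (fun t : Finset A => ∑ a ∈ t, q a)]
  rw [prod_ite, prod_const, prod_const, filter_mem_eq_inter, univ_inter]
  congr
  rw [Finset.filter_not, filter_mem_eq_inter, univ_inter, card_sdiff_of_subset (subset_univ _),
    card_univ]

theorem sum_prod_mul_card_filter (q : A → R) (P : A → Prop) [DecidablePred P] (h : ℕ → R) :
    ∑ u : K → A, (∏ k, q (u k)) * h #{k | P (u k)}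
      = ∑ d ∈ range (Fintype.card K + 1), (Fintype.card K).choose d
          * (∑ a with P a, q a) ^ d * (∑ a with ¬ P a, q a) ^ (Fintype.card K - d) * h d := by
  classical
  have hpowerset := sum_powerset_apply_card (x := (univ : Finset K))
    (fun d => (∑ a with P a, q a) ^ d * (∑ a with ¬ P a, q a) ^ (Fintype.card K - d) * h d)
  rw [powerset_univ, card_univ] at hpowerset
  simp only [nsmul_eq_mul, ← mul_assoc] at hpowerset
  rw [← hpowerset, ← sum_fiberwise univ (fun u : K → A => ({k | P (u k)} : Finset K))]
  refine sum_congr rfl fun s _ => ?_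
  rw [← sum_prod_of_filter_eq, sum_mul]
  exact sum_congr rfl fun u hu => by rw [(mem_filter.1 hu).2]

theorem sum_prod_mul_comp_embedding {E : Type*} [Fintype E] [DecidableEq E] (w : A → R)
    (hw : ∑ a, w a = 1) (ψ : K ↪ E) (h : (K → A) → R) :
    ∑ ω : E → A, (∏ e, w (ω e)) * h (ω ∘ ψ)
      = ∑ v : K → A, (∏ k, w (v k)) * h v := by
  classical
  rw [← sum_fiberwise univ (fun ω : E → A => ω ∘ ψ)]
  refine sum_congr rfl fun v _ => ?_
  set t : E → Finset A := fun e => {a | ∀ k, ψ k = e → v k = a}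
  have hfiber : ({ω | ω ∘ ψ = v} : Finset (E → A)) = Fintype.piFinset t := by
    ext ω
    simp only [t, mem_filter, mem_univ, true_and, Fintype.mem_piFinset, funext_iff,
      Function.comp_apply]
    constructor
    · rintro hω e k rfl; exact (hω k).symm
    · intro hω k; exact (hω (ψ k) k rfl).symm
  have hrange : ∀ k, t (ψ k) = {v k} := fun k => by
    ext a; simp [t, ψ.injective.eq_iff, eq_comm]
  have hout : ∀ e ∉ univ.map ψ, ∑ a ∈ t e, w a = 1 := fun e he => by
    have : t e = univ := by
      ext a; simp only [Finset.mem_map, mem_univ, true_and, not_exists] at he; simp [t, he]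
    rw [this, hw]
  rw [sum_congr rfl fun ω hω => by rw [(mem_filter.1 hω).2], ← sum_mul, hfiber,
    ← prod_univ_sum, ← prod_subset (subset_univ _) fun e _ => hout e, prod_map]
  simp only [hrange, sum_singleton]

end ProductWeights

def bernoulliWeight (p : ℝ) (b : Bool) : ℝ := if b then p else 1 - p

def pairWeight (p : ℝ) (x : Bool × Bool) : ℝ := bernoulliWeight p x.1 * bernoulliWeight p x.2

theorem bernoulliWeight_nonneg {p : ℝ} (hp0 : 0 ≤ p) (hp1 : p ≤ 1) (b : Bool) :
    0 ≤ bernoulliWeight p b := by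
  cases b <;> simp [bernoulliWeight, hp0, hp1]

theorem pairWeight_nonneg {p : ℝ} (hp0 : 0 ≤ p) (hp1 : p ≤ 1) (x : Bool × Bool) :
    0 ≤ pairWeight p x :=
  mul_nonneg (bernoulliWeight_nonneg hp0 hp1 _) (bernoulliWeight_nonneg hp0 hp1 _)

theorem card_eq_true_true_add_card_ne {K : Type*} [Fintype K] {u : K → Bool × Bool}
    (hu : ∀ k, u k ≠ (false, false)) :
    #{k | u k = (true, true)} + #{k | (u k).1 ≠ (u k).2} = Fintype.card K := by
  rw [← card_univ, ← card_filter_add_card_filter_not (s := univ) (fun k => (u k).1 ≠ (u k).2),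
    add_comm]
  congr 2
  refine filter_congr fun k _ => ?_
  have := hu k
  revert this
  rcases u k with ⟨_ | _, _ | _⟩ <;> simp

section PairWeight

variable {K : Type*} [Fintype K] [DecidableEq K]

theorem sum_prod_pairWeight (p : ℝ) :
    ∑ u : K → Bool × Bool, ∏ k, pairWeight p (u k) = 1 := by
  rw [← Fintype.prod_sum]
  refine prod_eq_one fun _ _ => ?_
  simp [Fintype.sum_prod_type, pairWeight, bernoulliWeight]
  ring

theorem sum_prod_pairWeight_of_exists_le {p : ℝ} (hp0 : 0 ≤ p) (hp1 : p ≤ 1) :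
    ∑ u : K → Bool × Bool with ∃ k, u k = (false, false), ∏ k, pairWeight p (u k)
      ≤ Fintype.card K * (1 - p) ^ 2 := by
  have hnone := sum_prod_of_filter_eq (pairWeight p) (· = (false, false)) (∅ : Finset K)
  simp only [filter_eq_empty_iff, mem_univ, true_implies, card_empty, pow_zero, one_mul,
    tsub_zero] at hnone
  have hsplit := sum_filter_add_sum_filter_not univ
    (fun u : K → Bool × Bool => ∃ k, u k = (false, false)) fun u => ∏ k, pairWeight p (u k)
  simp only [not_exists] at hsplit
  have hmass : ∑ a : Bool × Bool with ¬ a = (false, false), pairWeight p a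
      = 1 + -(1 - p) ^ 2 := by
    simp [Finset.sum_filter, Fintype.sum_prod_type, pairWeight, bernoulliWeight]; ring
  rw [sum_prod_pairWeight, hnone, hmass] at hsplit
  have hbernoulli := one_add_mul_le_pow (a := -(1 - p) ^ 2) (by nlinarith) (Fintype.card K)
  linarith

theorem sum_prod_pairWeight_mul_card_ne (p : ℝ) (h : ℕ → ℝ) :
    ∑ u : K → Bool × Bool, (∏ k, pairWeight p (u k)) * h #{k | (u k).1 ≠ (u k).2}
      = ∑ d ∈ range (Fintype.card K + 1), (Fintype.card K).choose d * (2 * p * (1 - p)) ^ d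
          * (1 - 2 * p * (1 - p)) ^ (Fintype.card K - d) * h d := by
  rw [sum_prod_mul_card_filter (pairWeight p) (fun a => a.1 ≠ a.2)]
  have hne : ∑ a : Bool × Bool with a.1 ≠ a.2, pairWeight p a = 2 * p * (1 - p) := by
    simp [Finset.sum_filter, Fintype.sum_prod_type, pairWeight, bernoulliWeight]; ring
  have heq : ∑ a : Bool × Bool with ¬ a.1 ≠ a.2, pairWeight p a = 1 - 2 * p * (1 - p) := by
    simp [Finset.sum_filter, Fintype.sum_prod_type, pairWeight, bernoulliWeight]; ring
  rw [hne, heq]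

theorem abs_sum_prod_pairWeight_sub_binomial_le {p : ℝ} (hp0 : 0 ≤ p) (hp1 : p ≤ 1)
    (F : ℕ → ℕ → ℝ) {M : ℝ} (hF : ∀ s t, |F s t| ≤ M) :
    |∑ u : K → Bool × Bool, (∏ k, pairWeight p (u k))
        * F #{k | u k = (true, true)} #{k | u k ≠ (false, false)}
      - ∑ d ∈ range (Fintype.card K + 1), (Fintype.card K).choose d * (2 * p * (1 - p)) ^ d
          * (1 - 2 * p * (1 - p)) ^ (Fintype.card K - d) * F (Fintype.card K - d) (Fintype.card K)|
      ≤ 2 * M * (Fintype.card K * (1 - p) ^ 2) := by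
  set N := Fintype.card K
  have hgood : ∀ u : K → Bool × Bool, (∀ k, u k ≠ (false, false)) →
      F #{k | u k = (true, true)} #{k | u k ≠ (false, false)}
        = F (N - #{k | (u k).1 ≠ (u k).2}) N := fun u hu => by
    have hcard := card_eq_true_true_add_card_ne hu
    rw [filter_true_of_mem fun k _ => hu k, card_univ]
    congr 1
    omega
  rw [← sum_prod_pairWeight_mul_card_ne p fun d => F (N - d) N, ← sum_sub_distrib,
    ← sum_filter_of_ne (p := fun u => ∃ k, u k = (false, false)) fun u _ hne => by
      by_contra hu
      exact hne (by rw [hgood u (not_exists.1 hu), sub_self])]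
  have hM : 0 ≤ M := (abs_nonneg _).trans (hF 0 0)
  calc _ ≤ ∑ u : K → Bool × Bool with ∃ k, u k = (false, false),
        (∏ k, pairWeight p (u k)) * (2 * M) := by
        refine (abs_sum_le_sum_abs _ _).trans (sum_le_sum fun u _ => ?_)
        have hQ : 0 ≤ ∏ k, pairWeight p (u k) :=
          prod_nonneg fun k _ => pairWeight_nonneg hp0 hp1 (u k)
        rw [← mul_sub, abs_mul, abs_of_nonneg hQ]
        gcongr
        exact (abs_sub _ _).trans ((add_le_add (hF _ _) (hF _ _)).trans_eq (two_mul M).symm)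
    _ ≤ 2 * M * (N * (1 - p) ^ 2) := by
        rw [← sum_mul, mul_comm]
        gcongr
        exact sum_prod_pairWeight_of_exists_le hp0 hp1

end PairWeight

theorem tendsto_sum_choose_mul_pow_mul {x : ℕ → ℝ} {r : ℝ} (hx0 : ∀ n, 0 ≤ x n)
    (hx1 : ∀ n, x n ≤ 1) (hr : Tendsto (fun n : ℕ => n * x n) atTop (𝓝 r))
    {g : ℕ → ℕ → ℝ} {G : ℕ → ℝ} {M : ℝ} (hg : ∀ n d, |g n d| ≤ M)
    (hG : ∀ d, Tendsto (g · d) atTop (𝓝 (G d))) :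
    Tendsto (fun n => ∑ d ∈ range (n + 1), n.choose d * x n ^ d * (1 - x n) ^ (n - d) * g n d)
      atTop (𝓝 (∑' d, Real.exp (-r) * r ^ d / d ! * G d)) := by
  have htsum : ∀ n, ∑ d ∈ range (n + 1), n.choose d * x n ^ d * (1 - x n) ^ (n - d) * g n d
      = ∑' d, n.choose d * x n ^ d * (1 - x n) ^ (n - d) * g n d := fun n =>
    (tsum_eq_sum fun d hd => by
      rw [Nat.choose_eq_zero_of_lt (by simpa [Nat.lt_succ_iff] using hd)]; simp).symm
  simp_rw [htsum]
  have hM : 0 ≤ M := (abs_nonneg _).trans (hg 0 0)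
  refine tendsto_tsum_of_dominated_convergence
    (bound := fun d => M * ((r + 1) ^ d / d !))
    ((Real.summable_pow_div_factorial (r + 1)).mul_left M)
    (fun d => (ProbabilityTheory.tendsto_choose_mul_pow_of_tendsto_mul_atTop d hr).mul (hG d)) ?_
  filter_upwards [hr.eventually_le_const (lt_add_one r)] with n hn d
  have hx := hx0 n
  have h1x : 0 ≤ 1 - x n := sub_nonneg.2 (hx1 n)
  calc ‖n.choose d * x n ^ d * (1 - x n) ^ (n - d) * g n d‖
      = n.choose d * x n ^ d * (1 - x n) ^ (n - d) * |g n d| := by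
        rw [Real.norm_eq_abs, abs_mul, abs_of_nonneg (by positivity)]
    _ ≤ n ^ d / d ! * x n ^ d * 1 * M := by
        gcongr
        exacts [Nat.choose_le_pow_div d n, pow_le_one₀ h1x (by linarith), hg n d]
    _ = M * ((n * x n) ^ d / d !) := by ring
    _ ≤ M * ((r + 1) ^ d / d !) := by gcongr

theorem integral_gnp (m : ℕ) {p : ℝ} (hp0 : 0 ≤ p) (hp1 : ENNReal.ofReal p ≤ 1)
    (F : ({e : Fin m × Fin m // e.1 < e.2} → Bool) → ℝ) :
    ∫ ω, F ω ∂gnp m (ENNReal.ofReal p) hp1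
      = ∑ ω, (∏ e, bernoulliWeight p (ω e)) * F ω := by
  have : IsProbabilityMeasure (gnp m (ENNReal.ofReal p) hp1) := by unfold gnp; infer_instance
  rw [integral_fintype .of_finite]
  refine sum_congr rfl fun ω _ => ?_
  rw [smul_eq_mul, measureReal_def, ← Set.univ_pi_singleton ω, gnp, Measure.pi_pi,
    ENNReal.toReal_prod]
  congr 1
  refine prod_congr rfl fun e _ => ?_
  rw [PMF.toMeasure_apply_singleton _ _ (measurableSet_singleton _)]
  refine (congrArg ENNReal.toReal (PMF.bernoulli_apply _ _)).trans ?_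
  cases ω e <;> simp [bernoulliWeight, ENNReal.coe_sub, ENNReal.coe_toNNReal ENNReal.ofReal_ne_top,
    ENNReal.toReal_sub_of_le hp1, hp0]

def sortedEdge {m : ℕ} (a b : Fin m) (h : a ≠ b) : {e : Fin m × Fin m // e.1 < e.2} :=
  ⟨(min a b, max a b), min_lt_max.2 h⟩

theorem eInd_eq_toNat {m : ℕ} (ω : {e : Fin m × Fin m // e.1 < e.2} → Bool) {a b : Fin m}
    (h : a ≠ b) : eInd ω a b = (ω (sortedEdge a b h)).toNat := by
  rcases h.lt_or_gt with hab | hab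
  · simp only [eInd, sortedEdge, hab, dite_true, min_eq_left hab.le, max_eq_right hab.le]
    cases ω _ <;> rfl
  · simp only [eInd, sortedEdge, hab, hab.not_gt, dite_true, dite_false, min_eq_right hab.le,
      max_eq_left hab.le]
    cases ω _ <;> rfl

theorem sortedEdge_eq_sortedEdge_iff {m : ℕ} {a b k l : Fin m} (hak : a ≠ k) (hbl : b ≠ l) :
    sortedEdge a k hak = sortedEdge b l hbl ↔ (a = b ∧ k = l) ∨ (a = l ∧ k = b) := by
  simp only [sortedEdge, Subtype.mk.injEq, Prod.mk.injEq, Fin.ext_iff, Fin.coe_min, Fin.coe_max]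
  omega

section LocalConfiguration

variable {m : ℕ} {a b : Fin m}

def pairEdges (hab : a ≠ b) :
    {k : Fin m // k ≠ a ∧ k ≠ b} × Bool ↪ {e : Fin m × Fin m // e.1 < e.2} where
  toFun kx := if kx.2 then sortedEdge a kx.1 kx.1.2.1.symm else sortedEdge b kx.1 kx.1.2.2.symm
  inj' := by
    rintro ⟨⟨k, hk⟩, _ | _⟩ ⟨⟨l, hl⟩, _ | _⟩ h <;>
      simp only [Bool.false_eq_true, ↓reduceIte] at h <;>
      rcases (sortedEdge_eq_sortedEdge_iff _ _).1 h with ⟨h1, h2⟩ | ⟨h1, -⟩ <;>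
      first
        | exact absurd h1 hab | exact absurd h1.symm hab
        | exact absurd h1.symm hl.1 | exact absurd h1.symm hl.2
        | simpa using h2

def localConfig (a b : Fin m) (ω : {e : Fin m × Fin m // e.1 < e.2} → Bool)
    (k : {k : Fin m // k ≠ a ∧ k ≠ b}) : Bool × Bool :=
  (ω (sortedEdge a k k.2.1.symm), ω (sortedEdge b k k.2.2.symm))

theorem integral_comp_localConfig {p : ℝ} (hp0 : 0 ≤ p) (hp1 : ENNReal.ofReal p ≤ 1)
    (hab : a ≠ b) (h : ({k : Fin m // k ≠ a ∧ k ≠ b} → Bool × Bool) → ℝ) :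
    ∫ ω, h (localConfig a b ω) ∂gnp m (ENNReal.ofReal p) hp1
      = ∑ u, (∏ k, pairWeight p (u k)) * h u := by
  classical
  let e : ({k : Fin m // k ≠ a ∧ k ≠ b} × Bool → Bool)
      ≃ ({k : Fin m // k ≠ a ∧ k ≠ b} → Bool × Bool) :=
    (Equiv.curry _ _ _).trans
      (Equiv.arrowCongr (.refl _) ((Equiv.boolArrowEquivProd Bool).trans (Equiv.prodComm _ _)))
  have hsum : ∑ a, bernoulliWeight p a = 1 := by simp [bernoulliWeight]
  rw [integral_gnp m hp0 hp1]
  change ∑ ω, _ * (h ∘ e) (ω ∘ pairEdges hab) = _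
  rw [sum_prod_mul_comp_embedding _ hsum, ← e.symm.sum_comp]
  refine sum_congr rfl fun u _ => ?_
  rw [Function.comp_apply, e.apply_symm_apply]
  simp [e, pairWeight, Fintype.prod_prod_type]

theorem Sij_eq_card (ω : {e : Fin m × Fin m // e.1 < e.2} → Bool) :
    Sij a b ω = #{k | localConfig a b ω k = (true, true)} := by
  rw [Sij, card_filter, sum_subtype (univ \ {a, b}) (p := fun k => k ≠ a ∧ k ≠ b) (by simp)]
  refine sum_congr rfl fun k _ => ?_
  rw [eInd_eq_toNat ω k.2.1.symm, eInd_eq_toNat ω k.2.2.symm]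
  unfold localConfig
  cases ω (sortedEdge a k _) <;> cases ω (sortedEdge b k _) <;> rfl

theorem Tij_eq_card (ω : {e : Fin m × Fin m // e.1 < e.2} → Bool) :
    Tij a b ω = #{k | localConfig a b ω k ≠ (false, false)} := by
  rw [Tij, card_filter, sum_subtype (univ \ {a, b}) (p := fun k => k ≠ a ∧ k ≠ b) (by simp)]
  refine sum_congr rfl fun k _ => ?_
  rw [eInd_eq_toNat ω k.2.1.symm, eInd_eq_toNat ω k.2.2.symm]
  unfold localConfig
  cases ω (sortedEdge a k _) <;> cases ω (sortedEdge b k _) <;> rfl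

theorem card_subtype_ne_and_ne (hab : a ≠ b) :
    Fintype.card {k : Fin m // k ≠ a ∧ k ≠ b} = m - 2 := by
  have : ({k | k ≠ a ∧ k ≠ b} : Finset (Fin m)) = univ \ {a, b} := by ext; simp
  rw [Fintype.card_subtype, this, card_sdiff_of_subset (subset_univ _), card_univ,
    Fintype.card_fin, card_pair hab]

end LocalConfiguration

noncomputable def jaccardRatio (p : ℝ) (s t : ℕ) : ℝ := if t = 0 then p / (2 - p) else s / t

theorem abs_integral_comp_jac_sub_binomial_le (n : ℕ) {p : ℝ} (hp0 : 0 ≤ p) (hp1 : p ≤ 1)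
    {a b : Fin (n + 2)} (hab : a ≠ b) (F : ℝ → ℝ) {M : ℝ} (hF : ∀ x, |F x| ≤ M) :
    |∫ ω, F (jac p a b ω) ∂gnp (n + 2) (ENNReal.ofReal p) (ENNReal.ofReal_le_one.mpr hp1)
      - ∑ d ∈ range (n + 1), n.choose d * (2 * p * (1 - p)) ^ d
          * (1 - 2 * p * (1 - p)) ^ (n - d) * F (jaccardRatio p (n - d) n)|
      ≤ 2 * M * (n * (1 - p) ^ 2) := by
  have hjac : ∀ ω, F (jac p a b ω)
      = F (jaccardRatio p #{k | localConfig a b ω k = (true, true)}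
          #{k | localConfig a b ω k ≠ (false, false)}) := fun ω => by
    rw [← Sij_eq_card, ← Tij_eq_card]; rfl
  simp_rw [hjac]
  rw [integral_comp_localConfig hp0 _ hab
    (fun u => F (jaccardRatio p #{k | u k = (true, true)} #{k | u k ≠ (false, false)}))]
  have := abs_sum_prod_pairWeight_sub_binomial_le hp0 hp1 (fun s t => F (jaccardRatio p s t))
    (fun _ _ => hF _) (K := {k : Fin (n + 2) // k ≠ a ∧ k ≠ b})
  rwa [card_subtype_ne_and_ne hab, Nat.add_sub_cancel] at this

theorem tendsto_natCast_mul_of_tendsto_add_two_mul {y : ℕ → ℝ} {c : ℝ}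
    (h : Tendsto (fun n : ℕ => ((n : ℝ) + 2) * y n) atTop (𝓝 c)) :
    Tendsto (fun n : ℕ => n * y n) atTop (𝓝 c) := by
  have hy : Tendsto y atTop (𝓝 0) := by
    have hinv : Tendsto (fun n : ℕ => ((n : ℝ) + 2)⁻¹) atTop (𝓝 0) :=
      (tendsto_atTop_add_const_right _ 2 tendsto_natCast_atTop_atTop).inv_tendsto_atTop
    simpa using (h.mul hinv).congr fun n => by field_simp
  simpa using (h.sub (hy.const_mul 2)).congr fun n => by ring

theorem tendsto_add_two_mul_one_sub_jaccardRatio (p : ℕ → ℝ) (d : ℕ) :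
    Tendsto (fun n : ℕ => ((n : ℝ) + 2) * (1 - jaccardRatio (p n) (n - d) n)) atTop
      (𝓝 d) := by
  have h : Tendsto (fun n : ℕ => (d : ℝ) * (1 + 2 * (n : ℝ)⁻¹)) atTop
      (𝓝 (d * (1 + 2 * 0))) :=
    ((tendsto_inv_atTop_nhds_zero_nat.const_mul 2).const_add 1).const_mul _
  rw [mul_zero, add_zero, mul_one] at h
  refine h.congr' ?_
  filter_upwards [eventually_ge_atTop d, eventually_ge_atTop 1] with n hdn hn
  have hn0 : (n : ℝ) ≠ 0 := by positivity
  rw [jaccardRatio, if_neg (by omega), Nat.cast_sub hdn]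
  field_simp
  ring

theorem jaccard_dense_poisson_limit_general (p : ℕ → ℝ) (hp : ∀ n, p n ∈ Set.Ioo (0 : ℝ) 1)
    (c : ℝ)
    (h : Tendsto (fun n : ℕ => ((n : ℝ) + 2) * (1 - p n)) atTop (nhds c))
    (i j : ℕ) (hij : i ≠ j) :
    ∀ f : BoundedContinuousFunction ℝ ℝ,
      Tendsto (fun n : ℕ =>
          ∫ ω, f (((n : ℝ) + 2) *
              (1 - jac (p n) (i : Fin (n + 2)) (j : Fin (n + 2)) ω))
            ∂(gnp (n + 2) (ENNReal.ofReal (p n)) (ENNReal.ofReal_le_one.mpr (hp n).2.le)))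
        atTop
        (nhds (∑' k : ℕ, Real.exp (-(2 * c)) * (2 * c) ^ k / (Nat.factorial k) * f k)) := by
  intro f
  have hp0 n := (hp n).1.le
  have hp1 n := (hp n).2.le
  have hq := tendsto_natCast_mul_of_tendsto_add_two_mul h
  have hq0 := ProbabilityTheory.tendsto_zero_of_tendsto_mul_atTop hq
  have hx : Tendsto (fun n : ℕ => n * (2 * p n * (1 - p n))) atTop (𝓝 (2 * c)) := by
    have hp_one : Tendsto p atTop (𝓝 1) := by simpa using hq0.const_sub 1
    simpa using ((hp_one.const_mul 2).mul hq).congr fun n => by ring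
  have herr : Tendsto (fun n : ℕ => 2 * ‖f‖ * (n * (1 - p n) ^ 2)) atTop (𝓝 0) := by
    simpa using ((hq.mul hq0).const_mul (2 * ‖f‖)).congr fun n => by ring
  have hf x : |f x| ≤ ‖f‖ := (Real.norm_eq_abs _).symm.trans_le (f.norm_coe_le_norm _)
  refine (tendsto_sum_choose_mul_pow_mul (fun n => by nlinarith [hp0 n, hp1 n])
      (fun n => by nlinarith [hp0 n, hp1 n]) hx (fun _ _ => hf _)
      fun d => (f.continuous.tendsto _).comp (tendsto_add_two_mul_one_sub_jaccardRatio p d)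
    ).congr_dist (squeeze_zero' (.of_forall fun _ => dist_nonneg) ?_ herr)
  filter_upwards [eventually_gt_atTop (max i j)] with n hn
  have hij' : (i : Fin (n + 2)) ≠ j := fun hEq => hij <| by
    simpa [Fin.val_cast_of_lt (by omega : i < n + 2), Fin.val_cast_of_lt (by omega : j < n + 2)]
      using congrArg Fin.val hEq
  rw [dist_comm, Real.dist_eq]
  exact abs_integral_comp_jac_sub_binomial_le n (hp0 n) (hp1 n) hij'
    (fun J => f ((n + 2) * (1 - J))) fun _ => hf _

/-- If `n(1-p) → c > 0`, then `n(1 − J_ij)` converges in distribution to a Poisson random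
variable with parameter `2c` (convergence in distribution stated via bounded continuous
test functions). -/
theorem jaccard_dense_poisson_limit (p : ℕ → ℝ) (hp : ∀ n, p n ∈ Set.Ioo (0 : ℝ) 1)
    (c : ℝ) (hc : 0 < c)
    (h : Tendsto (fun n : ℕ => ((n : ℝ) + 2) * (1 - p n)) atTop (nhds c))
    (i j : ℕ) (hij : i ≠ j) :
    ∀ f : BoundedContinuousFunction ℝ ℝ,
      Tendsto (fun n : ℕ =>
          ∫ ω, f (((n : ℝ) + 2) *
              (1 - jac (p n) (i : Fin (n + 2)) (j : Fin (n + 2)) ω))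
            ∂(gnp (n + 2) (ENNReal.ofReal (p n)) (ENNReal.ofReal_le_one.mpr (hp n).2.le)))
        atTop
        (nhds (∑' k : ℕ, Real.exp (-(2 * c)) * (2 * c) ^ k / (Nat.factorial k) * f k)) :=
  jaccard_dense_poisson_limit_general p hp c h i j hij
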